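/- Let G be an ample Hausdorff groupoid, R a unital commutative ring, and (Σ, i, q) a discrete twist over G. Suppose u ∈ Σ⁽⁰⁾ satisfies Σᵤᵘ ⊆ Iso(Σ)°, and f ∈ A_R(G; Σ) satisfies f(γᵤ) ≠ 0 for some γᵤ ∈ Σᵤᵘ. Then there exists a compact open set K ⊆ Σ⁽⁰⁾ containing u such that 1̃_K * f * 1̃_K is nonzero and supported in Iso(Σ)°. -/
import Mathlib


open Set Function TopologicalSpace Classical
noncomputable section

universe u v w

/-- An étale topological groupoid, encoded with total operations:
`mul a b` is only meaningful when `src a = rng b`. -/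
structure EtaleGroupoid (G : Type u) [TopologicalSpace G] where
  mul : G → G → G
  inv : G → G
  src : G → G
  rng : G → G
  rng_mul_self : ∀ g, mul (rng g) g = g
  mul_src_self : ∀ g, mul g (src g) = g
  src_inv : ∀ g, src (inv g) = rng g
  rng_inv : ∀ g, rng (inv g) = src g
  inv_inv : ∀ g, inv (inv g) = g
  inv_mul_self : ∀ g, mul (inv g) g = src g
  mul_inv_self : ∀ g, mul g (inv g) = rng g
  mul_assoc' : ∀ a b c, src a = rng b → src b = rng c →
    mul (mul a b) c = mul a (mul b c)
  src_mul : ∀ a b, src a = rng b → src (mul a b) = src b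
  rng_mul : ∀ a b, src a = rng b → rng (mul a b) = rng a
  continuous_inv : Continuous inv
  continuousOn_mul :
    ContinuousOn (fun p : G × G => mul p.1 p.2) {p : G × G | src p.1 = rng p.2}
  isLocalHomeomorph_src : IsLocalHomeomorph src

namespace EtaleGroupoid

variable {G : Type u} [TopologicalSpace G] (𝒢 : EtaleGroupoid G)

/-- The unit space `G⁽⁰⁾`. -/
def unitSpace : Set G := Set.range 𝒢.src

/-- The isotropy bundle `Iso(G) = {γ : r γ = s γ}`. -/
def iso : Set G := {g | 𝒢.rng g = 𝒢.src g}

/-- The isotropy group `Gᵤᵘ` at a unit `u`. -/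
def isoAt (u : G) : Set G := {g | 𝒢.rng g = u ∧ 𝒢.src g = u}

/-- `U` is a bisection: `src` and `rng` are injective on `U`. -/
def IsBisection (U : Set G) : Prop := Set.InjOn 𝒢.src U ∧ Set.InjOn 𝒢.rng U

/-- `U` is a compact open bisection. -/
def IsCOB (U : Set G) : Prop := IsCompact U ∧ IsOpen U ∧ 𝒢.IsBisection U

/-- Pointwise inverse of a set. -/
def setInv (U : Set G) : Set G := 𝒢.inv '' U

/-- Pointwise product of two sets (only composable products). -/
def setMul (U V : Set G) : Set G :=
  {g | ∃ a ∈ U, ∃ b ∈ V, 𝒢.src a = 𝒢.rng b ∧ g = 𝒢.mul a b}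

/-- `H` is a subgroupoid of `G`. -/
def IsSubgroupoid (H : Set G) : Prop :=
  (∀ a ∈ H, 𝒢.inv a ∈ H) ∧
  (∀ a ∈ H, ∀ b ∈ H, 𝒢.src a = 𝒢.rng b → 𝒢.mul a b ∈ H) ∧
  (∀ a ∈ H, 𝒢.src a ∈ H)

/-- The groupoid is effective: the interior of the isotropy is the unit space. -/
def Effective : Prop := interior 𝒢.iso = 𝒢.unitSpace

/-- A continuous (i.e. locally constant) `Rˣ`-valued 2-cocycle on `G`. -/
def IsCocycle {R : Type w} [CommRing R] (c : G → G → Rˣ) : Prop :=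
  IsLocallyConstant (fun p : {p : G × G // 𝒢.src p.1 = 𝒢.rng p.2} => c p.1.1 p.1.2) ∧
  (∀ a b d, 𝒢.src a = 𝒢.rng b → 𝒢.src b = 𝒢.rng d →
    c a b * c (𝒢.mul a b) d = c b d * c a (𝒢.mul b d)) ∧
  (∀ g, c (𝒢.rng g) g = 1 ∧ c g (𝒢.src g) = 1)

/-- Membership in the (cocycle-twisted) Steinberg algebra `A_R(G)`:
locally constant, compactly supported functions `G → R`. -/
def MemSt {R : Type w} [CommRing R] (f : G → R) : Prop :=
  IsLocallyConstant f ∧ ∃ K : Set G, IsCompact K ∧ Function.support f ⊆ K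

/-- Convolution on `A_R(G;σ)` twisted by a 2-cocycle `c`. -/
noncomputable def convC {R : Type w} [CommRing R] (c : G → G → Rˣ) (f g : G → R) :
    G → R := fun γ =>
  ∑ᶠ p : G × G,
    if 𝒢.src p.1 = 𝒢.rng p.2 ∧ 𝒢.mul p.1 p.2 = γ then
      (c p.1 p.2 : R) * f p.1 * g p.2 else 0

/-- A continuous `Γ`-grading on `G` (for a discrete group `Γ`). -/
def IsGrading {Γ : Type*} [Group Γ] (c : G → Γ) : Prop :=
  IsLocallyConstant c ∧ ∀ a b, 𝒢.src a = 𝒢.rng b → c (𝒢.mul a b) = c a * c b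

end EtaleGroupoid

/-- An ample groupoid: étale with a basis of compact open bisections. -/
structure AmpleGroupoid (G : Type u) [TopologicalSpace G] extends EtaleGroupoid G where
  ample : TopologicalSpace.IsTopologicalBasis {U : Set G | toEtaleGroupoid.IsCOB U}

/-- A discrete twist `G⁽⁰⁾ × Rˣ → Σ → G` over an ample groupoid `G`. -/
structure DiscreteTwist (R : Type w) [CommRing R] {G : Type u} {S : Type v}
    [TopologicalSpace G] [TopologicalSpace S]
    (𝒢 : AmpleGroupoid G) (𝒮 : EtaleGroupoid S) where
  i : G → Rˣ → S
  q : S → G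
  continuousOn_i : ∀ t : Rˣ, ContinuousOn (fun x => i x t) 𝒢.unitSpace
  continuous_q : Continuous q
  i_injOn : Set.InjOn (fun p : G × Rˣ => i p.1 p.2) (𝒢.unitSpace ×ˢ (Set.univ : Set Rˣ))
  q_surj : Function.Surjective q
  exact' : ∀ x ∈ 𝒢.unitSpace, q ⁻¹' {x} = {σ | ∃ t : Rˣ, σ = i x t}
  i_mul : ∀ x ∈ 𝒢.unitSpace, ∀ s t : Rˣ, 𝒮.mul (i x s) (i x t) = i x (s * t)
  unit_eq : 𝒮.unitSpace = (fun x => i x 1) '' 𝒢.unitSpace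
  q_mul : ∀ a b, 𝒮.src a = 𝒮.rng b → q (𝒮.mul a b) = 𝒢.mul (q a) (q b)
  q_inv : ∀ a, q (𝒮.inv a) = 𝒢.inv (q a)
  q_src : ∀ a, q (𝒮.src a) = 𝒢.src (q a)
  q_rng : ∀ a, q (𝒮.rng a) = 𝒢.rng (q a)
  q_unit_bij : Set.BijOn q 𝒮.unitSpace 𝒢.unitSpace
  central : ∀ (σ : S) (t : Rˣ),
    𝒮.mul (i (𝒢.rng (q σ)) t) σ = 𝒮.mul σ (i (𝒢.src (q σ)) t)
  loc_triv : ∀ α : G, ∃ B : Set G, IsOpen B ∧ α ∈ B ∧ 𝒢.IsBisection B ∧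
    ∃ P : G → S, ContinuousOn P B ∧ (∀ β ∈ B, q (P β) = β) ∧
      (∀ t : Rˣ, ContinuousOn (fun β => 𝒮.mul (i (𝒢.rng β) t) (P β)) B) ∧
      (∀ σ : S, q σ ∈ B →
        ∃! p : G × Rˣ, p.1 ∈ B ∧ 𝒮.mul (i (𝒢.rng p.1) p.2) (P p.1) = σ) ∧
      (∀ t : Rˣ, ∀ V ⊆ B, IsOpen V →
        IsOpen ((fun β => 𝒮.mul (i (𝒢.rng β) t) (P β)) '' V))

namespace DiscreteTwist

variable {R : Type w} [CommRing R] {G : Type u} {S : Type v}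
  [TopologicalSpace G] [TopologicalSpace S]
  {𝒢 : AmpleGroupoid G} {𝒮 : EtaleGroupoid S} (T : DiscreteTwist R 𝒢 𝒮)

/-- The action of `Rˣ` on `Σ`: `t • σ = i(r σ, t) σ`. -/
def act (t : Rˣ) (σ : S) : S := 𝒮.mul (T.i (𝒢.rng (T.q σ)) t) σ

/-- The function `1̃_X` associated to a subset `X ⊆ Σ`. -/
noncomputable def tilde (X : Set S) : S → R := fun σ =>
  if h : ∃ t : Rˣ, σ ∈ T.act t '' X then (((Classical.choose h)⁻¹ : Rˣ) : R) else 0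

/-- Membership in the twisted Steinberg algebra `A_R(G;Σ)`: locally constant,
`Rˣ`-contravariant functions with compact image of the support in `G`. -/
def MemA (f : S → R) : Prop :=
  IsLocallyConstant f ∧
  (∀ (t : Rˣ) (σ : S), f (T.act t σ) = ((t⁻¹ : Rˣ) : R) * f σ) ∧
  IsCompact (T.q '' Function.support f)

/-- A (not necessarily continuous) section of `q`. -/
noncomputable def sec : G → S := Function.surjInv T.q_surj

/-- Convolution on `A_R(G;Σ)`, defined via the section `sec`. -/
noncomputable def conv (f g : S → R) : S → R := fun σ =>
  ∑ᶠ α : G,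
    if 𝒢.rng α = 𝒢.rng (T.q σ) then
      f (T.sec α) * g (𝒮.mul (𝒮.inv (T.sec α)) σ) else 0

end DiscreteTwist

end
noncomputable section
namespace EtaleGroupoid
variable {X : Type*} [TopologicalSpace X] (𝒢 : EtaleGroupoid X)

lemma rng_rng (g : X) : 𝒢.rng (𝒢.rng g) = 𝒢.rng g := by
  have h := 𝒢.rng_mul g (𝒢.inv g) (𝒢.rng_inv g).symm
  rwa [𝒢.mul_inv_self] at h

lemma src_rng (g : X) : 𝒢.src (𝒢.rng g) = 𝒢.rng g := by
  have h := 𝒢.src_mul g (𝒢.inv g) (𝒢.rng_inv g).symm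
  rwa [𝒢.mul_inv_self, 𝒢.src_inv] at h

lemma src_src (g : X) : 𝒢.src (𝒢.src g) = 𝒢.src g := by
  have h : 𝒢.src g = 𝒢.rng (𝒢.inv g) := (𝒢.rng_inv g).symm
  rw [h, 𝒢.src_rng]

lemma rng_src (g : X) : 𝒢.rng (𝒢.src g) = 𝒢.src g := by
  have h : 𝒢.src g = 𝒢.rng (𝒢.inv g) := (𝒢.rng_inv g).symm
  rw [h, 𝒢.rng_rng]

lemma src_mem_unitSpace (g : X) : 𝒢.src g ∈ 𝒢.unitSpace := ⟨g, rfl⟩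

lemma rng_mem_unitSpace (g : X) : 𝒢.rng g ∈ 𝒢.unitSpace := ⟨𝒢.inv g, 𝒢.src_inv g⟩

lemma unit_src {e : X} (he : e ∈ 𝒢.unitSpace) : 𝒢.src e = e := by
  obtain ⟨g, rfl⟩ := he; exact 𝒢.src_src g

lemma unit_rng {e : X} (he : e ∈ 𝒢.unitSpace) : 𝒢.rng e = e := by
  obtain ⟨g, rfl⟩ := he; exact 𝒢.rng_src g

lemma eq_inv {a b : X} (h1 : 𝒢.src a = 𝒢.rng b) (h2 : 𝒢.mul a b = 𝒢.rng a) :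
    b = 𝒢.inv a := by
  have hb : b = 𝒢.mul (𝒢.src a) b := by rw [h1, 𝒢.rng_mul_self]
  have : 𝒢.mul (𝒢.src a) b = 𝒢.mul (𝒢.inv a) (𝒢.mul a b) := by
    rw [← 𝒢.inv_mul_self a, 𝒢.mul_assoc' _ _ _ (𝒢.src_inv a) h1]
  rw [hb, this, h2, ← 𝒢.src_inv a, 𝒢.mul_src_self]

lemma continuous_src : Continuous 𝒢.src := 𝒢.isLocalHomeomorph_src.continuous

lemma continuous_rng : Continuous 𝒢.rng := by
  have : 𝒢.rng = 𝒢.src ∘ 𝒢.inv := by funext g; simp [Function.comp, 𝒢.src_inv]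
  rw [this]; exact 𝒢.continuous_src.comp 𝒢.continuous_inv

lemma isOpen_unitSpace : IsOpen 𝒢.unitSpace :=
  𝒢.isLocalHomeomorph_src.isOpenMap.isOpen_range

end EtaleGroupoid
end
noncomputable section
namespace EtaleGroupoid
variable {X : Type*} [TopologicalSpace X] (𝒢 : EtaleGroupoid X)
lemma inv_mul_cancel_left {s τ : X} (h : 𝒢.src s = 𝒢.rng τ) :
    𝒢.mul (𝒢.inv s) (𝒢.mul s τ) = τ := by
  rw [← 𝒢.mul_assoc' _ _ _ (𝒢.src_inv s) h, 𝒢.inv_mul_self, h, 𝒢.rng_mul_self]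
end EtaleGroupoid
end
noncomputable section
namespace DiscreteTwist
open EtaleGroupoid

variable {R : Type*} [CommRing R] {G S : Type*}
  [TopologicalSpace G] [TopologicalSpace S]
  {𝒢 : AmpleGroupoid G} {𝒮 : EtaleGroupoid S} (T : DiscreteTwist R 𝒢 𝒮)

lemma q_sec (α : G) : T.q (T.sec α) = α := Function.surjInv_eq T.q_surj α

lemma q_i {x : G} (hx : x ∈ 𝒢.unitSpace) (t : Rˣ) : T.q (T.i x t) = x := by
  have h : T.i x t ∈ T.q ⁻¹' {x} := by
    rw [T.exact' x hx]; exact ⟨t, rfl⟩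
  simpa using h

lemma i_one_mem {x : G} (hx : x ∈ 𝒢.unitSpace) : T.i x 1 ∈ 𝒮.unitSpace := by
  rw [T.unit_eq]; exact ⟨x, hx, rfl⟩

lemma unit_eq_i {σ : S} {x : G} (hσ : σ ∈ 𝒮.unitSpace) (hx : x ∈ 𝒢.unitSpace)
    (h : T.q σ = x) : σ = T.i x 1 :=
  T.q_unit_bij.injOn hσ (T.i_one_mem hx) (by rw [h, T.q_i hx])

lemma unit_eq_unit {σ τ : S} (hσ : σ ∈ 𝒮.unitSpace) (hτ : τ ∈ 𝒮.unitSpace)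
    (h : T.q σ = T.q τ) : σ = τ := T.q_unit_bij.injOn hσ hτ h

lemma src_i {x : G} (hx : x ∈ 𝒢.unitSpace) (t : Rˣ) : 𝒮.src (T.i x t) = T.i x 1 := by
  apply T.unit_eq_i (𝒮.src_mem_unitSpace _) hx
  rw [T.q_src, T.q_i hx, 𝒢.unit_src hx]

lemma rng_i {x : G} (hx : x ∈ 𝒢.unitSpace) (t : Rˣ) : 𝒮.rng (T.i x t) = T.i x 1 := by
  apply T.unit_eq_i (𝒮.rng_mem_unitSpace _) hx
  rw [T.q_rng, T.q_i hx, 𝒢.unit_rng hx]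

lemma inv_i {x : G} (hx : x ∈ 𝒢.unitSpace) (t : Rˣ) :
    𝒮.inv (T.i x t) = T.i x t⁻¹ := by
  refine (𝒮.eq_inv ?_ ?_).symm
  · rw [T.src_i hx, T.rng_i hx]
  · rw [T.i_mul x hx t t⁻¹, mul_inv_cancel, T.rng_i hx]

lemma i_exists_of_q_unit {σ : S} {x : G} (hx : x ∈ 𝒢.unitSpace) (h : T.q σ = x) :
    ∃ t : Rˣ, σ = T.i x t := by
  have : σ ∈ T.q ⁻¹' {x} := by simpa using h
  rw [T.exact' x hx] at this; exact this

lemma i_inj {x y : G} {s t : Rˣ} (hx : x ∈ 𝒢.unitSpace) (hy : y ∈ 𝒢.unitSpace)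
    (h : T.i x s = T.i y t) : x = y ∧ s = t := by
  have := T.i_injOn (Set.mk_mem_prod hx (Set.mem_univ s))
    (Set.mk_mem_prod hy (Set.mem_univ t)) h
  exact ⟨congrArg Prod.fst this, congrArg Prod.snd this⟩

lemma rng_eq_i {σ : S} : 𝒮.rng σ = T.i (𝒢.rng (T.q σ)) 1 := by
  apply T.unit_eq_i (𝒮.rng_mem_unitSpace _) (𝒢.rng_mem_unitSpace _)
  rw [T.q_rng]

lemma src_eq_i {σ : S} : 𝒮.src σ = T.i (𝒢.src (T.q σ)) 1 := by
  apply T.unit_eq_i (𝒮.src_mem_unitSpace _) (𝒢.src_mem_unitSpace _)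
  rw [T.q_src]

lemma q_act (t : Rˣ) (σ : S) : T.q (T.act t σ) = T.q σ := by
  have hcomp : 𝒮.src (T.i (𝒢.rng (T.q σ)) t) = 𝒮.rng σ := by
    rw [T.src_i (𝒢.rng_mem_unitSpace _), T.rng_eq_i]
  rw [act, T.q_mul _ _ hcomp, T.q_i (𝒢.rng_mem_unitSpace _), 𝒢.rng_mul_self]

lemma act_i_one {x : G} (hx : x ∈ 𝒢.unitSpace) (t : Rˣ) :
    T.act t (T.i x 1) = T.i x t := by
  rw [act, T.q_i hx, 𝒢.unit_rng hx, T.i_mul x hx, mul_one]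

lemma exists_act_of_q_eq {σ' σ : S} (h : T.q σ' = T.q σ) :
    ∃ t : Rˣ, σ' = T.act t σ := by
  have hsrc : 𝒮.src σ' = 𝒮.src σ :=
    T.unit_eq_unit (𝒮.src_mem_unitSpace _) (𝒮.src_mem_unitSpace _)
      (by rw [T.q_src, T.q_src, h])
  have hcomp : 𝒮.src σ' = 𝒮.rng (𝒮.inv σ) := by rw [𝒮.rng_inv, hsrc]
  have hqτ : T.q (𝒮.mul σ' (𝒮.inv σ)) = 𝒢.rng (T.q σ) := by
    rw [T.q_mul _ _ hcomp, T.q_inv, h, 𝒢.mul_inv_self]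
  obtain ⟨t, ht⟩ := T.i_exists_of_q_unit (𝒢.rng_mem_unitSpace _) hqτ
  refine ⟨t, ?_⟩
  have : 𝒮.mul (𝒮.mul σ' (𝒮.inv σ)) σ = σ' := by
    rw [𝒮.mul_assoc' _ _ _ hcomp (𝒮.src_inv σ), 𝒮.inv_mul_self, ← hsrc,
      𝒮.mul_src_self]
  rw [act, ← ht, this]

lemma iso_preimage {σ : S} (h : T.q σ ∈ 𝒢.iso) : σ ∈ 𝒮.iso := by
  have : T.q (𝒮.rng σ) = T.q (𝒮.src σ) := by rw [T.q_rng, T.q_src]; exact h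
  exact T.unit_eq_unit (𝒮.rng_mem_unitSpace _) (𝒮.src_mem_unitSpace _) this

lemma iso_image {σ : S} (h : σ ∈ 𝒮.iso) : T.q σ ∈ 𝒢.iso := by
  have : T.q (𝒮.rng σ) = T.q (𝒮.src σ) := by rw [h]
  rwa [T.q_rng, T.q_src] at this

end DiscreteTwist
end
noncomputable section
namespace DiscreteTwist
open EtaleGroupoid

variable {R : Type*} [CommRing R] {G S : Type*}
  [TopologicalSpace G] [TopologicalSpace S]
  {𝒢 : AmpleGroupoid G} {𝒮 : EtaleGroupoid S} (T : DiscreteTwist R 𝒢 𝒮)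

lemma tilde_i {K₀ : Set G} (hK₀ : K₀ ⊆ 𝒢.unitSpace) {x : G} (hx : x ∈ K₀) (t : Rˣ) :
    T.tilde ((fun y => T.i y 1) '' K₀) (T.i x t) = ((t⁻¹ : Rˣ) : R) := by
  have hxu : x ∈ 𝒢.unitSpace := hK₀ hx
  have hex : ∃ s : Rˣ, T.i x t ∈ T.act s '' ((fun y => T.i y 1) '' K₀) :=
    ⟨t, T.i x 1, ⟨x, hx, rfl⟩, T.act_i_one hxu t⟩
  rw [tilde, dif_pos hex]
  obtain ⟨τ, ⟨y, hy, rfl⟩, hτ⟩ := Classical.choose_spec hex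
  rw [T.act_i_one (hK₀ hy)] at hτ
  have := (T.i_inj (hK₀ hy) hxu hτ).2
  rw [this]

lemma tilde_eq_zero {K₀ : Set G} (hK₀ : K₀ ⊆ 𝒢.unitSpace) {σ : S} (h : T.q σ ∉ K₀) :
    T.tilde ((fun y => T.i y 1) '' K₀) σ = 0 := by
  rw [tilde, dif_neg]
  rintro ⟨s, τ, ⟨y, hy, rfl⟩, hτ⟩
  rw [T.act_i_one (hK₀ hy)] at hτ
  exact h (by rw [← hτ, T.q_i (hK₀ hy)]; exact hy)

lemma isOpenMap_q : IsOpenMap T.q := by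
  intro V hV
  rw [isOpen_iff_forall_mem_open]
  rintro α ⟨σ, hσV, rfl⟩
  obtain ⟨B, hBopen, hαB, _, P, hPc, hPq, hSheet, huniq, -⟩ := T.loc_triv (T.q σ)
  have hqsheet : ∀ β ∈ B, ∀ t : Rˣ, T.q (𝒮.mul (T.i (𝒢.rng β) t) (P β)) = β := by
    intro β hβ t
    have hru : 𝒢.rng β ∈ 𝒢.unitSpace := 𝒢.rng_mem_unitSpace β
    have hcomp : 𝒮.src (T.i (𝒢.rng β) t) = 𝒮.rng (P β) := by
      rw [T.src_i hru]
      exact (T.unit_eq_i (𝒮.rng_mem_unitSpace _) hru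
        (by rw [T.q_rng, hPq β hβ])).symm
    rw [T.q_mul _ _ hcomp, T.q_i hru, hPq β hβ, 𝒢.rng_mul_self]
  obtain ⟨⟨β, t⟩, ⟨hβB, hst⟩, -⟩ := huniq σ hαB
  have hβ : β = T.q σ := by rw [← hst, hqsheet β hβB]
  subst hβ
  refine ⟨B ∩ (fun β' => 𝒮.mul (T.i (𝒢.rng β') t) (P β')) ⁻¹' V, ?_, ?_, ?_⟩
  · rintro β' ⟨hβ'B, hβ'V⟩
    exact ⟨_, hβ'V, hqsheet β' hβ'B t⟩
  · exact (hSheet t).isOpen_inter_preimage hBopen hV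
  · exact ⟨hβB, by rw [Set.mem_preimage, hst]; exact hσV⟩

end DiscreteTwist
end
noncomputable section
namespace DiscreteTwist
open EtaleGroupoid

variable {R : Type*} [CommRing R] {G S : Type*}
  [TopologicalSpace G] [TopologicalSpace S]
  {𝒢 : AmpleGroupoid G} {𝒮 : EtaleGroupoid S} (T : DiscreteTwist R 𝒢 𝒮)

lemma conv_tilde_left {K₀ : Set G} (hK₀ : K₀ ⊆ 𝒢.unitSpace) (f : S → R)
    (hfc : ∀ (t : Rˣ) (σ : S), f (T.act t σ) = ((t⁻¹ : Rˣ) : R) * f σ) (σ : S) :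
    T.conv (T.tilde ((fun y => T.i y 1) '' K₀)) f σ =
      if 𝒢.rng (T.q σ) ∈ K₀ then f σ else 0 := by
  set K : Set S := (fun y => T.i y 1) '' K₀ with hK
  -- every term with α ≠ rng (q σ) vanishes
  have hvanish : ∀ α : G, α ≠ 𝒢.rng (T.q σ) →
      (if 𝒢.rng α = 𝒢.rng (T.q σ) then
        T.tilde K (T.sec α) * f (𝒮.mul (𝒮.inv (T.sec α)) σ) else 0) = 0 := by
    intro α hα
    by_cases hc : 𝒢.rng α = 𝒢.rng (T.q σ)
    · rw [if_pos hc]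
      have hαK : α ∉ K₀ := by
        intro hmem
        exact hα (by rw [← hc, 𝒢.unit_rng (hK₀ hmem)])
      rw [T.tilde_eq_zero hK₀ (by rw [T.q_sec]; exact hαK), zero_mul]
    · exact if_neg hc
  rw [conv]
  by_cases hα₀ : 𝒢.rng (T.q σ) ∈ K₀
  · rw [finsum_eq_single _ (𝒢.rng (T.q σ)) hvanish,
      if_pos (𝒢.rng_rng (T.q σ)), if_pos hα₀]
    have hru : 𝒢.rng (T.q σ) ∈ 𝒢.unitSpace := 𝒢.rng_mem_unitSpace _
    obtain ⟨t₀, ht₀⟩ := T.i_exists_of_q_unit hru (T.q_sec (𝒢.rng (T.q σ)))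
    rw [ht₀, T.tilde_i hK₀ hα₀, T.inv_i hru]
    have : 𝒮.mul (T.i (𝒢.rng (T.q σ)) t₀⁻¹) σ = T.act t₀⁻¹ σ := rfl
    rw [this, hfc, _root_.inv_inv, ← mul_assoc, ← Units.val_mul, inv_mul_cancel,
      Units.val_one, one_mul]
  · rw [if_neg hα₀]
    apply finsum_eq_zero_of_forall_eq_zero
    intro α
    by_cases hc : α = 𝒢.rng (T.q σ)
    · subst hc
      rw [if_pos (𝒢.rng_rng (T.q σ)),
        T.tilde_eq_zero hK₀ (by rw [T.q_sec]; exact hα₀), zero_mul]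
    · exact hvanish α hc

lemma conv_tilde_right {K₀ : Set G} (hK₀ : K₀ ⊆ 𝒢.unitSpace) (g : S → R)
    (hgc : ∀ (t : Rˣ) (σ : S), g (T.act t σ) = ((t⁻¹ : Rˣ) : R) * g σ) (σ : S) :
    T.conv g (T.tilde ((fun y => T.i y 1) '' K₀)) σ =
      if 𝒢.src (T.q σ) ∈ K₀ then g σ else 0 := by
  set K : Set S := (fun y => T.i y 1) '' K₀ with hK
  -- key: if the tilde factor is nonzero then α = q σ and src (q σ) ∈ K₀
  have hkey : ∀ α : G, 𝒢.rng α = 𝒢.rng (T.q σ) →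
      T.tilde K (𝒮.mul (𝒮.inv (T.sec α)) σ) ≠ 0 →
      α = T.q σ ∧ 𝒢.src (T.q σ) ∈ K₀ := by
    intro α h1 hne
    have hcomp : 𝒮.src (𝒮.inv (T.sec α)) = 𝒮.rng σ := by
      rw [𝒮.src_inv]
      exact T.unit_eq_unit (𝒮.rng_mem_unitSpace _) (𝒮.rng_mem_unitSpace _)
        (by rw [T.q_rng, T.q_rng, T.q_sec, h1])
    have hq : T.q (𝒮.mul (𝒮.inv (T.sec α)) σ) = 𝒢.mul (𝒢.inv α) (T.q σ) := by
      rw [T.q_mul _ _ hcomp, T.q_inv, T.q_sec]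
    have hβK : 𝒢.mul (𝒢.inv α) (T.q σ) ∈ K₀ := by
      by_contra hβK
      exact hne (T.tilde_eq_zero hK₀ (by rw [hq]; exact hβK))
    set β := 𝒢.mul (𝒢.inv α) (T.q σ) with hβ
    have hβu : β ∈ 𝒢.unitSpace := hK₀ hβK
    have hcompG : 𝒢.src (𝒢.inv α) = 𝒢.rng (T.q σ) := by rw [𝒢.src_inv, h1]
    have hsrcβ : 𝒢.src β = 𝒢.src (T.q σ) := 𝒢.src_mul _ _ hcompG
    have hrngβ : 𝒢.rng β = 𝒢.src α := by rw [𝒢.rng_mul _ _ hcompG, 𝒢.rng_inv]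
    have hβsrc : β = 𝒢.src (T.q σ) := by rw [← 𝒢.unit_src hβu, hsrcβ]
    have hsrcα : 𝒢.src α = β := by rw [← hrngβ, 𝒢.unit_rng hβu]
    have hmul : 𝒢.mul α β = T.q σ := by
      rw [hβ, ← 𝒢.mul_assoc' α (𝒢.inv α) (T.q σ) (𝒢.rng_inv α).symm hcompG,
        𝒢.mul_inv_self, h1, 𝒢.rng_mul_self]
    have : α = T.q σ := by rw [← hmul, ← hsrcα, 𝒢.mul_src_self]
    exact ⟨this, by rw [← hβsrc]; exact hβK⟩
  rw [conv]
  by_cases hs : 𝒢.src (T.q σ) ∈ K₀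
  · have hvanish : ∀ α : G, α ≠ T.q σ →
        (if 𝒢.rng α = 𝒢.rng (T.q σ) then
          g (T.sec α) * T.tilde K (𝒮.mul (𝒮.inv (T.sec α)) σ) else 0) = 0 := by
      intro α hα
      by_cases hc : 𝒢.rng α = 𝒢.rng (T.q σ)
      · rw [if_pos hc]
        by_cases ht : T.tilde K (𝒮.mul (𝒮.inv (T.sec α)) σ) = 0
        · rw [ht, mul_zero]
        · exact absurd ((hkey α hc ht).1) hα
      · exact if_neg hc
    rw [finsum_eq_single _ (T.q σ) hvanish, if_pos rfl, if_pos hs]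
    -- compute the term at α = q σ
    obtain ⟨t₀, ht₀⟩ := T.exists_act_of_q_eq (σ' := σ) (σ := T.sec (T.q σ))
      (by rw [T.q_sec])
    have hxu : 𝒢.src (T.q σ) ∈ 𝒢.unitSpace := 𝒢.src_mem_unitSpace _
    have hqs : T.q (T.sec (T.q σ)) = T.q σ := T.q_sec _
    -- σ = sec(qσ) * i (src qσ) t₀  via centrality
    have hcent := T.central (T.sec (T.q σ)) t₀
    rw [hqs] at hcent
    have hσeq : σ = 𝒮.mul (T.sec (T.q σ)) (T.i (𝒢.src (T.q σ)) t₀) := by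
      conv_lhs => rw [ht₀]
      rw [act, hqs]
      exact hcent
    have hcomp2 : 𝒮.src (T.sec (T.q σ)) = 𝒮.rng (T.i (𝒢.src (T.q σ)) t₀) := by
      rw [T.rng_i hxu, T.src_eq_i, hqs]
    have hτ : 𝒮.mul (𝒮.inv (T.sec (T.q σ))) σ = T.i (𝒢.src (T.q σ)) t₀ := by
      have h1 := congrArg (𝒮.mul (𝒮.inv (T.sec (T.q σ)))) hσeq
      rw [h1, 𝒮.inv_mul_cancel_left hcomp2]
    rw [hτ, T.tilde_i hK₀ hs]
    have hgσ : g σ = ((t₀⁻¹ : Rˣ) : R) * g (T.sec (T.q σ)) := by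
      conv_lhs => rw [ht₀]
      rw [hgc]
    rw [hgσ, mul_comm]
  · rw [if_neg hs]
    apply finsum_eq_zero_of_forall_eq_zero
    intro α
    by_cases hc : 𝒢.rng α = 𝒢.rng (T.q σ)
    · rw [if_pos hc]
      by_cases ht : T.tilde K (𝒮.mul (𝒮.inv (T.sec α)) σ) = 0
      · rw [ht, mul_zero]
      · exact absurd (hkey α hc ht).2 hs
    · exact if_neg hc

end DiscreteTwist
end
noncomputable section
namespace DiscreteTwist
open EtaleGroupoid

variable {R : Type*} [CommRing R] {G S : Type*}
  [TopologicalSpace G] [TopologicalSpace S]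
  {𝒢 : AmpleGroupoid G} {𝒮 : EtaleGroupoid S} (T : DiscreteTwist R 𝒢 𝒮)

lemma exists_K0 [T2Space G] (u : S) (hu : u ∈ 𝒮.unitSpace)
    (hiso : 𝒮.isoAt u ⊆ interior 𝒮.iso) (f : S → R)
    (hcpt : IsCompact (T.q '' Function.support f)) :
    ∃ K₀ : Set G, K₀ ⊆ 𝒢.unitSpace ∧ IsCompact K₀ ∧ IsOpen K₀ ∧ T.q u ∈ K₀ ∧
      ∀ α ∈ T.q '' Function.support f,
        𝒢.rng α ∈ K₀ → 𝒢.src α ∈ K₀ → α ∈ interior 𝒢.iso := by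
  set x := T.q u with hxdef
  have hx : x ∈ 𝒢.unitSpace := T.q_unit_bij.mapsTo hu
  set D := T.q '' Function.support f with hD
  set C := D ∩ (interior 𝒢.iso)ᶜ with hC
  have hCcpt : IsCompact C := hcpt.inter_right isOpen_interior.isClosed_compl
  -- on C, the range or source differs from x
  have hCne : ∀ α ∈ C, 𝒢.rng α ≠ x ∨ 𝒢.src α ≠ x := by
    rintro α ⟨⟨σ, hσ, rfl⟩, hαc⟩
    by_contra hcon
    push_neg at hcon
    obtain ⟨hr, hs⟩ := hcon
    have hrσ : 𝒮.rng σ = u :=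
      T.unit_eq_unit (𝒮.rng_mem_unitSpace _) hu (by rw [T.q_rng, hr])
    have hsσ : 𝒮.src σ = u :=
      T.unit_eq_unit (𝒮.src_mem_unitSpace _) hu (by rw [T.q_src, hs])
    have hσiso : σ ∈ interior 𝒮.iso := hiso ⟨hrσ, hsσ⟩
    obtain ⟨V, hVsub, hVopen, hσV⟩ := mem_interior.mp hσiso
    have himg : T.q '' V ⊆ 𝒢.iso := by
      rintro β ⟨τ, hτ, rfl⟩
      exact T.iso_image (hVsub hτ)
    exact hαc (interior_maximal himg (T.isOpenMap_q V hVopen) ⟨σ, hσV, rfl⟩)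
  -- a base compact open unit neighbourhood of x
  obtain ⟨A₀, hA₀cob, hxA₀, hA₀sub⟩ :=
    𝒢.ample.exists_subset_of_mem_open hx 𝒢.isOpen_unitSpace
  -- separation data for each point of C
  have key : ∀ α : G, ∃ V A : Set G, IsCompact A ∧ IsOpen A ∧ x ∈ A ∧
      A ⊆ 𝒢.unitSpace ∧ IsOpen V ∧ (α ∈ C → α ∈ V) ∧
      (∀ β ∈ V, 𝒢.rng β ∉ A ∨ 𝒢.src β ∉ A) := by
    intro α
    by_cases hαC : α ∈ C
    · rcases hCne α hαC with hne | hne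
      · obtain ⟨O₁, O₂, hO₁, hO₂, hmem₁, hmem₂, hdisj⟩ := t2_separation hne
        obtain ⟨A, hAcob, hxA, hAsub⟩ := 𝒢.ample.exists_subset_of_mem_open
          (Set.mem_inter hmem₂ hx) (hO₂.inter 𝒢.isOpen_unitSpace)
        refine ⟨𝒢.rng ⁻¹' O₁, A, hAcob.1, hAcob.2.1, hxA,
          fun y hy => (hAsub hy).2, hO₁.preimage 𝒢.continuous_rng,
          fun _ => hmem₁, ?_⟩
        intro β hβ
        exact Or.inl fun hmem => Set.disjoint_left.mp hdisj hβ (hAsub hmem).1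
      · obtain ⟨O₁, O₂, hO₁, hO₂, hmem₁, hmem₂, hdisj⟩ := t2_separation hne
        obtain ⟨A, hAcob, hxA, hAsub⟩ := 𝒢.ample.exists_subset_of_mem_open
          (Set.mem_inter hmem₂ hx) (hO₂.inter 𝒢.isOpen_unitSpace)
        refine ⟨𝒢.src ⁻¹' O₁, A, hAcob.1, hAcob.2.1, hxA,
          fun y hy => (hAsub hy).2, hO₁.preimage 𝒢.continuous_src,
          fun _ => hmem₁, ?_⟩
        intro β hβ
        exact Or.inr fun hmem => Set.disjoint_left.mp hdisj hβ (hAsub hmem).1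
    · exact ⟨∅, A₀, hA₀cob.1, hA₀cob.2.1, hxA₀, hA₀sub, isOpen_empty,
        fun h => absurd h hαC, fun β hβ => absurd hβ (Set.notMem_empty β)⟩
  choose V A hAcpt hAopen hxA hAunit hVopen hmemV hsep using key
  -- finite subcover of C
  obtain ⟨s, hsC, hsfin, hcover⟩ := hCcpt.elim_finite_subcover_image
    (fun α _ => hVopen α) (fun α hα => Set.mem_biUnion hα (hmemV α hα))
  refine ⟨A₀ ∩ ⋂ α ∈ s, A α, fun y hy => hA₀sub hy.1,
    hA₀cob.1.inter_right (isClosed_biInter fun α _ => (hAcpt α).isClosed),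
    (hA₀cob.2.1).inter (hsfin.isOpen_biInter fun α _ => hAopen α),
    ⟨hxA₀, Set.mem_biInter fun α _ => hxA α⟩, ?_⟩
  intro α hαD hrα hsα
  by_contra hαint
  have hαC : α ∈ C := ⟨hαD, hαint⟩
  obtain ⟨α', hα's, hαV⟩ := Set.mem_iUnion₂.mp (hcover hαC)
  rcases hsep α' α hαV with h | h
  · exact h (Set.mem_iInter₂.mp hrα.2 α' hα's)
  · exact h (Set.mem_iInter₂.mp hsα.2 α' hα's)

end DiscreteTwist
end

/-- compression lemma: if `u ∈ Σ⁽⁰⁾` has `Σᵤᵘ ⊆ Iso(Σ)°` and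
`f ∈ A_R(G;Σ)` is nonzero at some `γᵤ ∈ Σᵤᵘ`, then there is a compact open
`K ⊆ Σ⁽⁰⁾` containing `u` with `1̃_K * f * 1̃_K` nonzero and supported in `Iso(Σ)°`. -/
theorem stmt_6 {R : Type*} [CommRing R] {G S : Type*}
    [TopologicalSpace G] [TopologicalSpace S] [T2Space G] [T2Space S]
    {𝒢 : AmpleGroupoid G} {𝒮 : EtaleGroupoid S} (T : DiscreteTwist R 𝒢 𝒮)
    (u : S) (hu : u ∈ 𝒮.unitSpace) (hiso : 𝒮.isoAt u ⊆ interior 𝒮.iso)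
    (f : S → R) (hf : T.MemA f)
    (γu : S) (hγ : γu ∈ 𝒮.isoAt u) (hne : f γu ≠ 0) :
    ∃ K : Set S, K ⊆ 𝒮.unitSpace ∧ IsCompact K ∧ IsOpen K ∧ u ∈ K ∧
      T.conv (T.conv (T.tilde K) f) (T.tilde K) ≠ 0 ∧
      Function.support (T.conv (T.conv (T.tilde K) f) (T.tilde K)) ⊆ interior 𝒮.iso := by
  obtain ⟨hflc, hfc, hcpt⟩ := hf
  obtain ⟨K₀, hK₀unit, hK₀cpt, hK₀open, hxK₀, hK₀prop⟩ :=
    T.exists_K0 u hu hiso f hcpt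
  set g : S → R := fun σ => if 𝒢.rng (T.q σ) ∈ K₀ then f σ else 0 with hg
  have hgc : ∀ (t : Rˣ) (σ : S), g (T.act t σ) = ((t⁻¹ : Rˣ) : R) * g σ := by
    intro t σ
    simp only [hg, T.q_act]
    split_ifs with h
    · exact hfc t σ
    · rw [mul_zero]
  have hleft : T.conv (T.tilde ((fun y => T.i y 1) '' K₀)) f = g :=
    funext fun σ => T.conv_tilde_left hK₀unit f hfc σ
  have hfull : T.conv (T.conv (T.tilde ((fun y => T.i y 1) '' K₀)) f)
      (T.tilde ((fun y => T.i y 1) '' K₀)) =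
      fun σ => if 𝒢.src (T.q σ) ∈ K₀ then g σ else 0 := by
    rw [hleft]
    exact funext fun σ => T.conv_tilde_right hK₀unit g hgc σ
  have hr : 𝒢.rng (T.q γu) ∈ K₀ := by rw [← T.q_rng, hγ.1]; exact hxK₀
  have hs' : 𝒢.src (T.q γu) ∈ K₀ := by rw [← T.q_src, hγ.2]; exact hxK₀
  refine ⟨(fun y => T.i y 1) '' K₀, ?_, ?_, ?_, ?_, ?_, ?_⟩
  · rintro σ ⟨y, hy, rfl⟩
    exact T.i_one_mem (hK₀unit hy)
  · exact hK₀cpt.image_of_continuousOn ((T.continuousOn_i 1).mono hK₀unit)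
  · have hset : (fun y => T.i y 1) '' K₀ = 𝒮.unitSpace ∩ T.q ⁻¹' K₀ := by
      ext σ
      constructor
      · rintro ⟨y, hy, rfl⟩
        exact ⟨T.i_one_mem (hK₀unit hy),
          by rw [Set.mem_preimage, T.q_i (hK₀unit hy)]; exact hy⟩
      · rintro ⟨hσu, hσq⟩
        exact ⟨T.q σ, hσq, (T.unit_eq_i hσu (hK₀unit hσq) rfl).symm⟩
    rw [hset]
    exact 𝒮.isOpen_unitSpace.inter (hK₀open.preimage T.continuous_q)
  · exact ⟨T.q u, hxK₀, (T.unit_eq_i hu (hK₀unit hxK₀) rfl).symm⟩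
  · rw [hfull]
    intro h0
    have hev := congrFun h0 γu
    simp only [Pi.zero_apply, if_pos hs', hg, if_pos hr] at hev
    exact hne hev
  · rw [hfull]
    intro σ hσ
    rw [Function.mem_support] at hσ
    simp only [hg] at hσ
    by_cases h1 : 𝒢.src (T.q σ) ∈ K₀
    · rw [if_pos h1] at hσ
      by_cases h2 : 𝒢.rng (T.q σ) ∈ K₀
      · rw [if_pos h2] at hσ
        have hq : T.q σ ∈ interior 𝒢.iso :=
          hK₀prop (T.q σ) ⟨σ, hσ, rfl⟩ h2 h1
        have hsub : T.q ⁻¹' (interior 𝒢.iso) ⊆ 𝒮.iso := fun τ hτ =>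
          T.iso_preimage (interior_subset hτ)
        exact interior_maximal hsub (isOpen_interior.preimage T.continuous_q) hq
      · rw [if_neg h2] at hσ
        exact absurd rfl hσ
    · rw [if_neg h1] at hσ
      exact absurd rfl hσ
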